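/- For all integers 0 ≤ l' ≤ l, the element {1}_q · {l'}_q! = (q−1)·∏_{a=1}^{l'}(q^a−1) divides {2l+1}_{q, l+1} = ∏_{a=l+1}^{2l+1}(q^a − 1) in ℤ[q,q^{-1}]. In particular, the quotient {2l+1}_{q,l+1}/({1}_q {l'}_q!) appearing in the ideal Z_{Br}^{(l_1,…,l_n)} is an element of ℤ[q,q^{-1}]. -/

import Mathlib

open LaurentPolynomial Finset

/-- `{i}_q = q^i - 1` in `ℤ[q,q⁻¹]`. -/
noncomputable def qInt (i : ℤ) : LaurentPolynomial ℤ := T i - 1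

/-- `{i}_{q,n} = {i}_q {i-1}_q ⋯ {i-n+1}_q`. -/
noncomputable def qShift (i : ℤ) (n : ℕ) : LaurentPolynomial ℤ :=
  ∏ r ∈ Finset.range n, qInt (i - r)

/-- `{n}_q! = {n}_{q,n}`. -/
noncomputable def qFact (n : ℕ) : LaurentPolynomial ℤ := qShift n n

/-! The `q`-Pascal rule `{i+1}_{q,k+1} = {k+1}_q {i}_{q,k} + q^{k+1} {i}_{q,k+1}` shows by
induction on `n` that `{n}_{q,k} / {k}_q!` (a `q`-binomial coefficient) lies in `ℤ[q,q⁻¹]`.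
Hence `{k}_q! ∣ {2l+1}_{q,l+1}` for `k = l + 1`, and `{1}_q {l'}_q!` divides
`{l+1}_q! = {l+1}_q {l}_q!` because `q - 1 ∣ q^{l+1} - 1`. -/

lemma qInt_zero : qInt 0 = 0 := by
  simp [qInt]

lemma qInt_add (i j : ℤ) : qInt (i + j) = qInt i + T i * qInt j := by
  simp only [qInt, T_add]
  ring

lemma qInt_dvd_qInt_mul (i : ℤ) (n : ℕ) : qInt i ∣ qInt (i * n) := by
  simpa [qInt, T_pow, mul_comm] using sub_dvd_pow_sub_pow (T i : LaurentPolynomial ℤ) 1 n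

@[simp]
lemma qShift_zero (i : ℤ) : qShift i 0 = 1 := by
  simp [qShift]

lemma qShift_succ (i : ℤ) (k : ℕ) : qShift i (k + 1) = qShift i k * qInt (i - k) :=
  prod_range_succ _ _

lemma qShift_succ' (i : ℤ) (k : ℕ) : qShift (i + 1) (k + 1) = qInt (i + 1) * qShift i k := by
  rw [qShift, prod_range_succ', mul_comm, qShift]
  simp only [Nat.cast_zero, sub_zero, Nat.cast_succ, add_sub_add_right_eq_sub]

lemma qShift_natCast_eq_zero {n k : ℕ} (h : n < k) : qShift n k = 0 :=
  prod_eq_zero (mem_range.2 h) (by simp [qInt_zero])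

lemma qShift_add_one_succ (i : ℤ) (k : ℕ) :
    qShift (i + 1) (k + 1) = qInt (k + 1) * qShift i k + T (k + 1) * qShift i (k + 1) := by
  have hsplit : qInt (i + 1) = qInt (k + 1) + T (k + 1) * qInt (i - k) := by
    rw [← qInt_add]
    ring_nf
  rw [qShift_succ', qShift_succ, hsplit]
  ring

lemma qFact_succ (n : ℕ) : qFact (n + 1) = qInt (n + 1) * qFact n := by
  simp only [qFact, Nat.cast_succ, qShift_succ']

lemma qFact_dvd_qFact {m n : ℕ} (h : m ≤ n) : qFact m ∣ qFact n := by
  induction n, h using Nat.le_induction with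
  | base => exact dvd_rfl
  | succ n _ ih => exact ih.trans (qFact_succ n ▸ dvd_mul_left _ _)

lemma qFact_dvd_qShift (n k : ℕ) : qFact k ∣ qShift n k := by
  induction n generalizing k with
  | zero =>
    cases k with
    | zero => simp [qFact]
    | succ k => rw [qShift_natCast_eq_zero (Nat.succ_pos k)]; exact dvd_zero _
  | succ n ih =>
    cases k with
    | zero => simp [qFact]
    | succ k =>
      rw [Nat.cast_succ, qShift_add_one_succ]
      refine dvd_add ?_ (dvd_mul_of_dvd_right (ih (k + 1)) _)
      rw [qFact_succ]
      exact mul_dvd_mul_left _ (ih k)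

/-- For all `0 ≤ l' ≤ l`, the element `{1}_q · {l'}_q!` divides `{2l+1}_{q,l+1}`
in `ℤ[q,q⁻¹]`. -/
theorem qInt_one_mul_qFact_dvd (l l' : ℕ) (h : l' ≤ l) :
    qInt 1 * qFact l' ∣ qShift (2 * l + 1) (l + 1) := by
  have hqInt : qInt 1 ∣ qInt (l + 1) := by
    simpa using qInt_dvd_qInt_mul 1 (l + 1)
  calc qInt 1 * qFact l' ∣ qInt (l + 1) * qFact l := mul_dvd_mul hqInt (qFact_dvd_qFact h)
    _ = qFact (l + 1) := (qFact_succ l).symm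
    _ ∣ qShift (2 * l + 1) (l + 1) := by
      simpa using qFact_dvd_qShift (2 * l + 1) (l + 1)
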